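/- arXiv:1508.00625 — 6 statements merged into one kernel-verified Lean document; each statement's English description precedes it below -/
import Mathlib

section
/- Let A be a PSD 4×4 matrix with A_{11}=A_{44}=1, A_{22}=A_{33}=δ, A_{14}=A_{41}=ε, and all other entries zero, where ε, δ > 0 and ε + δ < 1. The greedy procedure that first picks the optimal 2-sparse unit-norm vector (which has support {1,4} and objective value 1+ε) and then the best 2-sparse unit vector on the remaining support {2,3} (value δ) achieves total objective 1+ε+δ, whereas the pair of 2-sparse unit vectors supported on {1,2} and {3,4} achieves total objective 2 > 1+ε+δ. -/
open Matrix BigOperators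

/-- Sub-optimality of greedy deflation on the 4×4 example matrix:
the best 2-sparse unit vector has value 1+ε (supported on {1,4}); the best
2-sparse unit vector on the remaining support {2,3} has value δ; so greedy
achieves 1+ε+δ, while the disjoint pair supported on {1,2} and {3,4} achieves
total value 2 > 1+ε+δ. -/
theorem stmt3 (ε δ : ℝ) (hε : 0 < ε) (hδ : 0 < δ) (hεδ : ε + δ < 1)
    (A : Matrix (Fin 4) (Fin 4) ℝ) (hApsd : A.PosSemidef)
    (hA : A = !![1, 0, 0, ε; 0, δ, 0, 0; 0, 0, δ, 0; ε, 0, 0, 1]) :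
    -- the best single 2-sparse unit vector achieves value 1+ε
    (IsGreatest
      {t : ℝ | ∃ x : Fin 4 → ℝ, (∑ i, x i ^ 2 = 1) ∧
        (Finset.univ.filter (fun i => x i ≠ 0)).card ≤ 2 ∧ t = x ⬝ᵥ A *ᵥ x}
      (1 + ε)) ∧
    -- attained by a vector supported on {1,4} (0-indexed: {0,3})
    (∃ x : Fin 4 → ℝ, (∑ i, x i ^ 2 = 1) ∧
      (∀ i, i ≠ 0 → i ≠ 3 → x i = 0) ∧ x ⬝ᵥ A *ᵥ x = 1 + ε) ∧
    -- on the remaining support {2,3} (0-indexed: {1,2}) the best value is δ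
    (IsGreatest
      {t : ℝ | ∃ x : Fin 4 → ℝ, (∑ i, x i ^ 2 = 1) ∧
        (∀ i, i ≠ 1 → i ≠ 2 → x i = 0) ∧ t = x ⬝ᵥ A *ᵥ x}
      δ) ∧
    -- the disjoint pair supported on {1,2} and {3,4} achieves total value 2
    (∃ x y : Fin 4 → ℝ, (∑ i, x i ^ 2 = 1) ∧ (∑ i, y i ^ 2 = 1) ∧
      (∀ i, x i ≠ 0 → y i = 0) ∧
      (∀ i, i ≠ 0 → i ≠ 1 → x i = 0) ∧
      (∀ i, i ≠ 2 → i ≠ 3 → y i = 0) ∧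
      x ⬝ᵥ A *ᵥ x + y ⬝ᵥ A *ᵥ y = 2) ∧
    1 + ε + δ < 2 := by
  subst hA
  have hquad : ∀ x : Fin 4 → ℝ,
      x ⬝ᵥ (!![1, 0, 0, ε; 0, δ, 0, 0; 0, 0, δ, 0; ε, 0, 0, 1] : Matrix (Fin 4) (Fin 4) ℝ) *ᵥ x
        = x 0 ^ 2 + x 3 ^ 2 + 2 * ε * (x 0 * x 3) + δ * (x 1 ^ 2 + x 2 ^ 2) := by
    intro x
    simp [dotProduct, Matrix.mulVec, Fin.sum_univ_four, Matrix.vecHead, Matrix.vecTail]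
    ring
  have hc : (Real.sqrt (1/2)) ^ 2 = 1/2 := Real.sq_sqrt (by norm_num)
  set c := Real.sqrt (1/2) with hcdef
  have hcne : c ≠ 0 := by
    intro h; rw [h] at hc; norm_num at hc
  refine ⟨⟨⟨![c, 0, 0, c], ?_, ?_, ?_⟩, ?_⟩, ⟨![c, 0, 0, c], ?_, ?_, ?_⟩,
    ⟨⟨![0, 1, 0, 0], ?_, ?_, ?_⟩, ?_⟩,
    ⟨![1, 0, 0, 0], ![0, 0, 0, 1], ?_, ?_, ?_, ?_, ?_, ?_⟩, by linarith⟩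
  · simp [Fin.sum_univ_four]; linarith
  · have : (Finset.univ.filter (fun i => ![c, 0, 0, c] i ≠ 0)) ⊆ {0, 3} := by
      intro i hi
      simp only [Finset.mem_filter] at hi
      fin_cases i <;> simp_all
    calc _ ≤ ({0, 3} : Finset (Fin 4)).card := Finset.card_le_card this
      _ ≤ 2 := by decide
  · rw [hquad]; simp; nlinarith [hc]
  · rintro t ⟨x, hx1, hx2, rfl⟩
    rw [hquad]
    rw [Fin.sum_univ_four] at hx1
    nlinarith [sq_nonneg (x 0 - x 3), sq_nonneg (x 1), sq_nonneg (x 2), hx1]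
  · simp [Fin.sum_univ_four]; linarith
  · intro i h0 h3; fin_cases i <;> simp_all
  · rw [hquad]; simp; nlinarith [hc]
  · simp [Fin.sum_univ_four]
  · intro i h1 h2; fin_cases i <;> simp_all
  · rw [hquad]; simp
  · rintro t ⟨x, hx1, hx2, rfl⟩
    have h0 : x 0 = 0 := hx2 0 (by decide) (by decide)
    have h3 : x 3 = 0 := hx2 3 (by decide) (by decide)
    rw [hquad, h0, h3]
    simp [Fin.sum_univ_four, h0, h3] at hx1
    nlinarith
  · simp [Fin.sum_univ_four]
  · simp [Fin.sum_univ_four]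
  · intro i hi; fin_cases i <;> simp_all
  · intro i h0 h1; fin_cases i <;> simp_all
  · intro i h2 h3; fin_cases i <;> simp_all
  · rw [hquad, hquad]; simp; norm_num
end

section
/- For any real d×n matrix M and natural numbers r, k with r + k ≤ min{d, n}, the sum of the singular values σ_{r+1}(M) + ⋯ + σ_{r+k}(M) is at most (k/√(r+k))·‖M‖_F. -/
open Matrix BigOperators

/-- The singular values of a real d×n matrix M, indexed (in no particular
order) by `Fin n`: the square roots of the eigenvalues of MᴴM. -/
noncomputable def singularValues {d n : ℕ} (M : Matrix (Fin d) (Fin n) ℝ) :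
    Fin n → ℝ :=
  fun i => Real.sqrt ((Matrix.isHermitian_conjTranspose_mul_self M).eigenvalues i)

/-- σ is the decreasing enumeration of the singular values of M. -/
def IsSortedSingularValues {d n : ℕ} (M : Matrix (Fin d) (Fin n) ℝ)
    (σ : Fin n → ℝ) : Prop :=
  Antitone σ ∧ ∃ e : Equiv.Perm (Fin n), σ = singularValues M ∘ e

/-- The Frobenius norm. -/
noncomputable def frobNorm {d n : ℕ} (M : Matrix (Fin d) (Fin n) ℝ) : ℝ :=
  Real.sqrt (∑ i, ∑ j, (M i j) ^ 2)

lemma filter_lt_card {n m : ℕ} (h : m ≤ n) :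
    (Finset.univ.filter (fun i : Fin n => (i : ℕ) < m)).card = m := by
  have : Finset.univ.filter (fun i : Fin n => (i : ℕ) < m)
      = Finset.map (Fin.castLEEmb h) Finset.univ := by
    ext i
    simp only [Finset.mem_filter, Finset.mem_univ, true_and, Finset.mem_map, Fin.castLEEmb,
      Function.Embedding.coeFn_mk]
    constructor
    · intro hi; exact ⟨⟨i, hi⟩, by simp [Fin.castLE, Fin.ext_iff]⟩
    · rintro ⟨j, rfl⟩; simpa using j.2
  rw [this, Finset.card_map, Finset.card_univ, Fintype.card_fin]

/-- Sum of squares of singular values equals sum of squared entries. -/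
lemma sum_sv_sq {d n : ℕ} (M : Matrix (Fin d) (Fin n) ℝ) :
    ∑ i, (singularValues M i) ^ 2 = ∑ i, ∑ j, (M i j) ^ 2 := by
  have hA := Matrix.isHermitian_conjTranspose_mul_self M
  have hnn : ∀ i, 0 ≤ hA.eigenvalues i := fun i =>
    (Matrix.posSemidef_conjTranspose_mul_self M).eigenvalues_nonneg i
  have h1 : ∑ i, (singularValues M i) ^ 2 = ∑ i, hA.eigenvalues i := by
    refine Finset.sum_congr rfl fun i _ => ?_
    simp only [singularValues]; exact Real.sq_sqrt (hnn i)
  have h2 : (Mᴴ * M).trace = ∑ i, hA.eigenvalues i := by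
    conv_lhs => rw [hA.spectral_theorem, Unitary.conjStarAlgAut_apply]
    rw [Matrix.trace_mul_cycle]
    have hu : (star (hA.eigenvectorUnitary : Matrix (Fin n) (Fin n) ℝ)) *
        (hA.eigenvectorUnitary : Matrix (Fin n) (Fin n) ℝ) = 1 := by
      simpa using hA.eigenvectorUnitary.2.1
    rw [hu, one_mul, Matrix.trace_diagonal]
    simp
  rw [h1, ← h2, Matrix.trace, Finset.sum_comm]
  refine Finset.sum_congr rfl fun i _ => ?_
  simp [Matrix.diag, Matrix.mul_apply, Matrix.conjTranspose_apply, pow_two]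

/-- σ_{r+1}(M) + ⋯ + σ_{r+k}(M) ≤ (k/√(r+k))·‖M‖_F for r + k ≤ min{d,n}. -/
theorem stmt5 (d n r k : ℕ) (M : Matrix (Fin d) (Fin n) ℝ)
    (hrk : r + k ≤ min d n)
    (σ : Fin n → ℝ) (hσ : IsSortedSingularValues M σ) :
    ∑ i ∈ Finset.univ.filter (fun i : Fin n => r ≤ (i : ℕ) ∧ (i : ℕ) < r + k), σ i
      ≤ (k / Real.sqrt (r + k)) * frobNorm M := by
  obtain ⟨hanti, e, hperm⟩ := hσ
  have hσnn : ∀ i, 0 ≤ σ i := by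
    intro i; rw [hperm]; exact Real.sqrt_nonneg _
  have hF : 0 ≤ frobNorm M := Real.sqrt_nonneg _
  rcases Nat.eq_zero_or_pos k with hk0 | hk
  · have hempty : Finset.univ.filter (fun i : Fin n => r ≤ (i : ℕ) ∧ (i : ℕ) < r + k)
        = ∅ := by
      ext i
      simp only [Finset.mem_filter, Finset.mem_univ, true_and, Finset.notMem_empty,
        iff_false, not_and, not_lt]
      omega
    rw [hempty, Finset.sum_empty, hk0]
    positivity
  -- now k ≥ 1
  have hn : r + k ≤ n := le_trans hrk (min_le_right d n)
  have hrn : r < n := by omega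
  set A := Finset.univ.filter (fun i : Fin n => r ≤ (i : ℕ) ∧ (i : ℕ) < r + k) with hA
  set B := Finset.univ.filter (fun i : Fin n => (i : ℕ) < r + k) with hB
  set C := Finset.univ.filter (fun i : Fin n => (i : ℕ) < r) with hC
  set ρ := σ ⟨r, hrn⟩ with hρ
  have hcardB : B.card = r + k := filter_lt_card hn
  have hcardC : C.card = r := filter_lt_card (by omega)
  -- split B into C and A
  have hCB : C = B.filter (fun i : Fin n => (i : ℕ) < r) := by
    ext i; simp [hB, hC]; omega
  have hAB : A = B.filter (fun i : Fin n => ¬ (i : ℕ) < r) := by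
    ext i; simp [hA, hB]; omega
  have hsplit : ∑ i ∈ B, σ i = ∑ i ∈ C, σ i + ∑ i ∈ A, σ i := by
    rw [hCB, hAB, Finset.sum_filter_add_sum_filter_not]
  have hcardA : A.card = k := by
    have := Finset.card_filter_add_card_filter_not
      (s := B) (p := fun i : Fin n => (i : ℕ) < r)
    rw [← hCB, ← hAB] at this
    omega
  -- each term of A is ≤ ρ
  have hsA : ∑ i ∈ A, σ i ≤ (k : ℝ) * ρ := by
    calc ∑ i ∈ A, σ i ≤ ∑ _i ∈ A, ρ := by
          refine Finset.sum_le_sum fun i hi => ?_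
          simp only [hA, Finset.mem_filter] at hi
          exact hanti (by simpa [Fin.le_def] using hi.2.1)
    _ = (A.card : ℝ) * ρ := by rw [Finset.sum_const, nsmul_eq_mul]
    _ = (k : ℝ) * ρ := by rw [hcardA]
  -- each term of C is ≥ ρ
  have hsC : (r : ℝ) * ρ ≤ ∑ i ∈ C, σ i := by
    rw [← hcardC]
    push_cast
    calc (C.card : ℝ) * ρ = ∑ _i ∈ C, ρ := by rw [Finset.sum_const, nsmul_eq_mul]
    _ ≤ ∑ i ∈ C, σ i := by
      refine Finset.sum_le_sum fun i hi => ?_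
      simp only [hC, Finset.mem_filter] at hi
      refine hanti ?_
      simp only [Fin.le_def]
      omega
  -- Cauchy–Schwarz on B
  have hCS : (∑ i ∈ B, σ i) ^ 2 ≤ ((r + k : ℕ) : ℝ) * ∑ i ∈ B, σ i ^ 2 := by
    have := sq_sum_le_card_mul_sum_sq (s := B) (f := σ)
    rwa [hcardB] at this
  -- sum of squares over B bounded by frobNorm squared
  have hsq : ∑ i ∈ B, σ i ^ 2 ≤ frobNorm M ^ 2 := by
    have h1 : ∑ i ∈ B, σ i ^ 2 ≤ ∑ i, σ i ^ 2 :=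
      Finset.sum_le_sum_of_subset_of_nonneg (Finset.subset_univ _)
        (fun i _ _ => sq_nonneg _)
    have h2 : ∑ i, σ i ^ 2 = ∑ i, (singularValues M i) ^ 2 := by
      rw [hperm]
      exact Fintype.sum_equiv e _ _ (fun i => rfl)
    have h3 : frobNorm M ^ 2 = ∑ i, ∑ j, (M i j) ^ 2 := by
      rw [frobNorm, Real.sq_sqrt]
      positivity
    rw [h2, sum_sv_sq, ← h3] at h1
    exact h1
  -- combine
  have hrkpos : (0 : ℝ) < ((r + k : ℕ) : ℝ) := by positivity
  have hsqrt : Real.sqrt ((r + k : ℕ) : ℝ) * Real.sqrt ((r + k : ℕ) : ℝ)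
      = ((r + k : ℕ) : ℝ) := Real.mul_self_sqrt (le_of_lt hrkpos)
  have hsqrtpos : 0 < Real.sqrt ((r + k : ℕ) : ℝ) := Real.sqrt_pos.mpr hrkpos
  have hBnn : 0 ≤ ∑ i ∈ B, σ i := Finset.sum_nonneg fun i _ => hσnn i
  have hT : ∑ i ∈ B, σ i ≤ Real.sqrt ((r + k : ℕ) : ℝ) * frobNorm M := by
    have h1 : (∑ i ∈ B, σ i) ^ 2 ≤ (Real.sqrt ((r + k : ℕ) : ℝ) * frobNorm M) ^ 2 := by
      rw [mul_pow, Real.sq_sqrt (le_of_lt hrkpos)]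
      calc (∑ i ∈ B, σ i) ^ 2 ≤ ((r + k : ℕ) : ℝ) * ∑ i ∈ B, σ i ^ 2 := hCS
      _ ≤ ((r + k : ℕ) : ℝ) * frobNorm M ^ 2 :=
          mul_le_mul_of_nonneg_left hsq (le_of_lt hrkpos)
    calc ∑ i ∈ B, σ i = Real.sqrt ((∑ i ∈ B, σ i) ^ 2) := (Real.sqrt_sq hBnn).symm
    _ ≤ Real.sqrt ((Real.sqrt ((r + k : ℕ) : ℝ) * frobNorm M) ^ 2) := Real.sqrt_le_sqrt h1
    _ = Real.sqrt ((r + k : ℕ) : ℝ) * frobNorm M := Real.sqrt_sq (by positivity)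
  -- (r+k) * S ≤ k * T
  have hmain : ((r + k : ℕ) : ℝ) * (∑ i ∈ A, σ i) ≤ (k : ℝ) * (∑ i ∈ B, σ i) := by
    push_cast
    nlinarith [hsA, hsC, hsplit,
      mul_le_mul_of_nonneg_left hsA (by positivity : (0:ℝ) ≤ (r:ℝ)),
      mul_le_mul_of_nonneg_left hsC (by positivity : (0:ℝ) ≤ (k:ℝ))]
  -- finish
  have hfin : ((r + k : ℕ) : ℝ) * (∑ i ∈ A, σ i)
      ≤ (k : ℝ) * (Real.sqrt ((r + k : ℕ) : ℝ) * frobNorm M) := by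
    calc ((r + k : ℕ) : ℝ) * (∑ i ∈ A, σ i) ≤ (k : ℝ) * (∑ i ∈ B, σ i) := hmain
    _ ≤ (k : ℝ) * (Real.sqrt ((r + k : ℕ) : ℝ) * frobNorm M) := by
      exact mul_le_mul_of_nonneg_left hT (by positivity)
  have hcast : ((r : ℝ) + (k : ℝ)) = ((r + k : ℕ) : ℝ) := by push_cast; ring
  rw [div_mul_eq_mul_div, le_div_iff₀ (by rw [hcast]; exact hsqrtpos)]
  rw [hcast]
  rw [← mul_le_mul_iff_of_pos_right hsqrtpos]
  calc (∑ i ∈ A, σ i) * Real.sqrt ((r + k : ℕ) : ℝ) * Real.sqrt ((r + k : ℕ) : ℝ)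
      = ((r + k : ℕ) : ℝ) * (∑ i ∈ A, σ i) := by rw [mul_assoc, hsqrt]; ring
  _ ≤ (k : ℝ) * (Real.sqrt ((r + k : ℕ) : ℝ) * frobNorm M) := hfin
  _ = (k : ℝ) * frobNorm M * Real.sqrt ((r + k : ℕ) : ℝ) := by ring
end

section
/- Let A and Ā be real d×d PSD matrices and 𝒳 ⊆ ℝ^{d×k} be any set. Let X⋆ maximize Tr(Xᵀ A X) over 𝒳 and X̄⋆ maximize Tr(Xᵀ Ā X) over 𝒳. If X̄ ∈ 𝒳 satisfies Tr(X̄ᵀ Ā X̄) ≥ γ · Tr(X̄⋆ᵀ Ā X̄⋆) for some 0 < γ ≤ 1, then Tr(X̄ᵀ A X̄) ≥ γ · Tr(X⋆ᵀ A X⋆) − 2·‖A − Ā‖₂ · max_{X∈𝒳} ‖X‖_F². -/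
open Matrix BigOperators

/-- The spectral (operator) norm: supremum of ‖Mx‖₂ over unit vectors x. -/
noncomputable def specNorm {d n : ℕ} (M : Matrix (Fin d) (Fin n) ℝ) : ℝ :=
  sSup {t : ℝ | ∃ x : Fin n → ℝ, (∑ i, x i ^ 2 = 1) ∧
    t = Real.sqrt (∑ i, (M *ᵥ x) i ^ 2)}

lemma specNorm_bddAbove {d n : ℕ} (M : Matrix (Fin d) (Fin n) ℝ) :
    BddAbove {t : ℝ | ∃ x : Fin n → ℝ, (∑ i, x i ^ 2 = 1) ∧
      t = Real.sqrt (∑ i, (M *ᵥ x) i ^ 2)} := by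
  refine ⟨frobNorm M, ?_⟩
  rintro t ⟨x, hx, rfl⟩
  unfold frobNorm
  apply Real.sqrt_le_sqrt
  apply Finset.sum_le_sum
  intro i _
  calc (M *ᵥ x) i ^ 2 = (∑ j, M i j * x j) ^ 2 := rfl
    _ ≤ (∑ j, M i j ^ 2) * ∑ j, x j ^ 2 := Finset.sum_mul_sq_le_sq_mul_sq _ _ _
    _ = ∑ j, M i j ^ 2 := by rw [hx, mul_one]

lemma specNorm_nonneg {d n : ℕ} (M : Matrix (Fin d) (Fin n) ℝ) : 0 ≤ specNorm M :=
  Real.sSup_nonneg (by rintro t ⟨x, hx, rfl⟩; exact Real.sqrt_nonneg _)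

lemma specNorm_mulVec_le {d n : ℕ} (M : Matrix (Fin d) (Fin n) ℝ) (x : Fin n → ℝ) :
    Real.sqrt (∑ i, (M *ᵥ x) i ^ 2) ≤ specNorm M * Real.sqrt (∑ i, x i ^ 2) := by
  rcases eq_or_ne (∑ i, x i ^ 2) 0 with h0 | h0
  · have hx : x = 0 := by
      funext i
      have := (Finset.sum_eq_zero_iff_of_nonneg (fun i _ => sq_nonneg (x i))).1 h0 i
        (Finset.mem_univ i)
      exact pow_eq_zero_iff (n := 2) (by norm_num) |>.1 this
    simp [hx, Matrix.mulVec_zero, Real.sqrt_zero]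
  · have hpos : 0 < ∑ i, x i ^ 2 :=
      lt_of_le_of_ne (Finset.sum_nonneg fun i _ => sq_nonneg _) (Ne.symm h0)
    set s : ℝ := Real.sqrt (∑ i, x i ^ 2) with hs
    have hspos : 0 < s := Real.sqrt_pos.2 hpos
    have hsq : s ^ 2 = ∑ i, x i ^ 2 := Real.sq_sqrt hpos.le
    have hmem : s⁻¹ * Real.sqrt (∑ i, (M *ᵥ x) i ^ 2) ∈
        {t : ℝ | ∃ y : Fin n → ℝ, (∑ i, y i ^ 2 = 1) ∧
          t = Real.sqrt (∑ i, (M *ᵥ y) i ^ 2)} := by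
      refine ⟨fun i => s⁻¹ * x i, ?_, ?_⟩
      · have : ∑ i, (s⁻¹ * x i) ^ 2 = s⁻¹ ^ 2 * ∑ i, x i ^ 2 := by
          rw [Finset.mul_sum]; congr 1; funext i; ring
        rw [this, ← hsq]
        field_simp
      · have hmv : (M *ᵥ fun i => s⁻¹ * x i) = fun i => s⁻¹ * (M *ᵥ x) i := by
          funext i
          simp [Matrix.mulVec, dotProduct, Finset.mul_sum]
          congr 1; funext j; ring
        rw [hmv]
        have : ∑ i, (s⁻¹ * (M *ᵥ x) i) ^ 2 = s⁻¹ ^ 2 * ∑ i, (M *ᵥ x) i ^ 2 := by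
          rw [Finset.mul_sum]; congr 1; funext i; ring
        rw [this, Real.sqrt_mul (sq_nonneg _), Real.sqrt_sq (inv_nonneg.2 hspos.le)]
    have hle := le_csSup (specNorm_bddAbove M) hmem
    have := mul_le_mul_of_nonneg_left hle hspos.le
    calc Real.sqrt (∑ i, (M *ᵥ x) i ^ 2)
        = s * (s⁻¹ * Real.sqrt (∑ i, (M *ᵥ x) i ^ 2)) := by
          field_simp
      _ ≤ s * specNorm M := this
      _ = specNorm M * s := mul_comm _ _

lemma abs_trace_quad_le {d k : ℕ} (M : Matrix (Fin d) (Fin d) ℝ)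
    (X : Matrix (Fin d) (Fin k) ℝ) :
    |Matrix.trace (Xᵀ * M * X)| ≤ specNorm M * frobNorm X ^ 2 := by
  have htr : Matrix.trace (Xᵀ * M * X)
      = ∑ j, ∑ i, X i j * (M *ᵥ fun i => X i j) i := by
    simp only [Matrix.trace, Matrix.diag, Matrix.mul_apply, Matrix.transpose_apply,
      Matrix.mulVec, dotProduct, Finset.sum_mul, Finset.mul_sum]
    congr 1; funext j
    rw [Finset.sum_comm]
    congr 1; funext i
    congr 1; funext l
    ring
  have hfrob : frobNorm X ^ 2 = ∑ j, ∑ i, X i j ^ 2 := by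
    unfold frobNorm
    rw [Real.sq_sqrt (by positivity)]
    exact Finset.sum_comm
  rw [htr, hfrob, Finset.mul_sum]
  calc |∑ j, ∑ i, X i j * (M *ᵥ fun i => X i j) i|
      ≤ ∑ j, |∑ i, X i j * (M *ᵥ fun i => X i j) i| := Finset.abs_sum_le_sum_abs _ _
    _ ≤ ∑ j, specNorm M * ∑ i, X i j ^ 2 := by
        apply Finset.sum_le_sum
        intro j _
        set y : Fin d → ℝ := fun i => X i j with hy
        have h1 : |∑ i, y i * (M *ᵥ y) i|
            ≤ Real.sqrt (∑ i, y i ^ 2) * Real.sqrt (∑ i, (M *ᵥ y) i ^ 2) := by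
          have hcs := Finset.sum_mul_sq_le_sq_mul_sq Finset.univ y (fun i => (M *ᵥ y) i)
          rw [← Real.sqrt_sq_eq_abs,
            ← Real.sqrt_mul (Finset.sum_nonneg fun i _ => sq_nonneg _)]
          exact Real.sqrt_le_sqrt hcs
        have h2 : Real.sqrt (∑ i, (M *ᵥ y) i ^ 2)
            ≤ specNorm M * Real.sqrt (∑ i, y i ^ 2) := specNorm_mulVec_le M y
        calc |∑ i, y i * (M *ᵥ y) i|
            ≤ Real.sqrt (∑ i, y i ^ 2) * (specNorm M * Real.sqrt (∑ i, y i ^ 2)) :=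
              h1.trans (mul_le_mul_of_nonneg_left h2 (Real.sqrt_nonneg _))
          _ = specNorm M * (Real.sqrt (∑ i, y i ^ 2) * Real.sqrt (∑ i, y i ^ 2)) := by ring
          _ = specNorm M * ∑ i, y i ^ 2 := by
              rw [Real.mul_self_sqrt (Finset.sum_nonneg fun i _ => sq_nonneg _)]

/-- If X̄ is a γ-approximate maximizer of Tr(XᵀĀX) over 𝒳, then it achieves
Tr(X̄ᵀAX̄) ≥ γ·Tr(X⋆ᵀAX⋆) − 2‖A−Ā‖₂·max_{X∈𝒳}‖X‖_F². -/
theorem stmt12 (d k : ℕ)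
    (A Abar : Matrix (Fin d) (Fin d) ℝ)
    (hA : A.PosSemidef) (hAbar : Abar.PosSemidef)
    (𝒳 : Set (Matrix (Fin d) (Fin k) ℝ))
    (Xstar : Matrix (Fin d) (Fin k) ℝ) (hXstar : Xstar ∈ 𝒳)
    (hXstarMax : ∀ X ∈ 𝒳, Matrix.trace (Xᵀ * A * X) ≤ Matrix.trace (Xstarᵀ * A * Xstar))
    (Xbarstar : Matrix (Fin d) (Fin k) ℝ) (hXbarstar : Xbarstar ∈ 𝒳)
    (hXbarstarMax : ∀ X ∈ 𝒳,
      Matrix.trace (Xᵀ * Abar * X) ≤ Matrix.trace (Xbarstarᵀ * Abar * Xbarstar))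
    (Mf : ℝ) (hMf : IsGreatest {t : ℝ | ∃ X ∈ 𝒳, t = frobNorm X ^ 2} Mf)
    (γ : ℝ) (hγ0 : 0 < γ) (hγ1 : γ ≤ 1)
    (Xbar : Matrix (Fin d) (Fin k) ℝ) (hXbar : Xbar ∈ 𝒳)
    (hXbarApprox : γ * Matrix.trace (Xbarstarᵀ * Abar * Xbarstar) ≤
      Matrix.trace (Xbarᵀ * Abar * Xbar)) :
    γ * Matrix.trace (Xstarᵀ * A * Xstar) - 2 * specNorm (A - Abar) * Mf ≤
      Matrix.trace (Xbarᵀ * A * Xbar) := by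
  set S := specNorm (A - Abar) with hS
  have hSnn : 0 ≤ S := specNorm_nonneg _
  have hMf_bar : frobNorm Xbar ^ 2 ≤ Mf := hMf.2 ⟨Xbar, hXbar, rfl⟩
  have hMf_star : frobNorm Xstar ^ 2 ≤ Mf := hMf.2 ⟨Xstar, hXstar, rfl⟩
  have hMfnn : 0 ≤ Mf := (sq_nonneg (frobNorm Xbar)).trans hMf_bar
  have h1 := abs_trace_quad_le (A - Abar) Xbar
  have h2 := abs_trace_quad_le (A - Abar) Xstar
  have hb1 : -(S * Mf) ≤ Matrix.trace (Xbarᵀ * (A - Abar) * Xbar) := by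
    have ha := (abs_le.1 h1).1
    have hm := mul_le_mul_of_nonneg_left hMf_bar hSnn
    rw [← hS] at ha
    linarith
  have hb2 : Matrix.trace (Xstarᵀ * (A - Abar) * Xstar) ≤ S * Mf := by
    have ha := (abs_le.1 h2).2
    have hm := mul_le_mul_of_nonneg_left hMf_star hSnn
    rw [← hS] at ha
    linarith
  have e1 : Matrix.trace (Xbarᵀ * A * Xbar) =
      Matrix.trace (Xbarᵀ * Abar * Xbar) + Matrix.trace (Xbarᵀ * (A - Abar) * Xbar) := by
    rw [Matrix.mul_sub, Matrix.sub_mul, Matrix.trace_sub]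
    ring
  have e2 : Matrix.trace (Xstarᵀ * A * Xstar) =
      Matrix.trace (Xstarᵀ * Abar * Xstar) + Matrix.trace (Xstarᵀ * (A - Abar) * Xstar) := by
    rw [Matrix.mul_sub, Matrix.sub_mul, Matrix.trace_sub]
    ring
  have hm1 : γ * Matrix.trace (Xstarᵀ * Abar * Xstar) ≤
      γ * Matrix.trace (Xbarstarᵀ * Abar * Xbarstar) :=
    mul_le_mul_of_nonneg_left (hXbarstarMax Xstar hXstar) hγ0.le
  have hγSMf : γ * (S * Mf) ≤ S * Mf := by
    nlinarith [mul_nonneg hSnn hMfnn]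
  have hγt2 : γ * Matrix.trace (Xstarᵀ * (A - Abar) * Xstar) ≤ S * Mf :=
    (mul_le_mul_of_nonneg_left hb2 hγ0.le).trans hγSMf
  nlinarith [hXbarApprox, hm1, hb1, hγt2, e1, e2]
end

section
/- Let A and Ā be real d×d PSD matrices such that E = A − Ā is also PSD, and let 𝒳 ⊆ ℝ^{d×k} be a set of matrices with orthonormal columns. Let X⋆ maximize Tr(Xᵀ A X) over 𝒳 and X̄⋆ maximize Tr(Xᵀ Ā X) over 𝒳. If X̄ ∈ 𝒳 satisfies Tr(X̄ᵀ Ā X̄) ≥ γ·Tr(X̄⋆ᵀ Ā X̄⋆) for some 0 < γ ≤ 1, then Tr(X̄ᵀ A X̄) ≥ γ·Tr(X⋆ᵀ A X⋆) − ∑_{i=1}^k λ_i(A − Ā). -/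
open Matrix BigOperators

/-- λ is the decreasing enumeration of the eigenvalues of the Hermitian
matrix A. -/
def IsSortedEigenvalues {d : ℕ} {A : Matrix (Fin d) (Fin d) ℝ}
    (hA : A.IsHermitian) (lam : Fin d → ℝ) : Prop :=
  Antitone lam ∧ ∃ e : Equiv.Perm (Fin d), lam = hA.eigenvalues ∘ e

lemma psd_diag_nonneg {n : Type*} [Fintype n] [DecidableEq n] {M : Matrix n n ℝ}
    (hM : M.PosSemidef) (i : n) : 0 ≤ M i i := by
  have := hM.2 (Finsupp.single i 1)
  simpa using this

lemma psd_trace_nonneg {n : Type*} [Fintype n] [DecidableEq n] {M : Matrix n n ℝ}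
    (hM : M.PosSemidef) : 0 ≤ M.trace :=
  Finset.sum_nonneg fun i _ => psd_diag_nonneg hM i

lemma card_filter_lt {d k : ℕ} (hk : k ≤ d) :
    (Finset.univ.filter (fun i : Fin d => (i:ℕ) < k)).card = k := by
  have : Finset.univ.filter (fun i : Fin d => (i:ℕ) < k)
      = Finset.map (Fin.castLEEmb hk) Finset.univ := by
    ext i
    simp only [Finset.mem_filter, Finset.mem_univ, true_and, Finset.mem_map,
      Fin.castLEEmb_apply]
    constructor
    · intro h; exact ⟨⟨i, h⟩, rfl⟩
    · rintro ⟨j, rfl⟩; exact j.isLt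
  simp [this]

/-- Rearrangement-type bound: weights in [0,1] summing to k pick out at most
the top k values of an antitone sequence. -/
lemma comb_bound {d k : ℕ} (hk : k ≤ d) (lam c : Fin d → ℝ) (hmono : Antitone lam)
    (hc0 : ∀ i, 0 ≤ c i) (hc1 : ∀ i, c i ≤ 1) (hsum : ∑ i, c i = (k : ℝ)) :
    ∑ i, lam i * c i ≤ ∑ i ∈ Finset.univ.filter (fun i : Fin d => (i : ℕ) < k), lam i := by
  rcases Nat.eq_zero_or_pos k with rfl | hkpos
  · have hz := (Finset.sum_eq_zero_iff_of_nonneg (fun i (_ : i ∈ Finset.univ) => hc0 i)).mp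
      (by simpa using hsum)
    have : ∑ i, lam i * c i = 0 :=
      Finset.sum_eq_zero fun i _ => by rw [hz i (Finset.mem_univ i), mul_zero]
    simp [this]
  · set t := lam ⟨k - 1, by omega⟩ with ht
    have hge : ∀ i : Fin d, (i : ℕ) < k → t ≤ lam i := by
      intro i hi
      exact hmono (by simp [Fin.le_def]; omega)
    have hle : ∀ i : Fin d, ¬ (i : ℕ) < k → lam i ≤ t := by
      intro i hi
      exact hmono (by simp [Fin.le_def]; omega)
    have key : ∀ i : Fin d, lam i * c i ≤
        (if (i : ℕ) < k then lam i + t * (c i - 1) else t * c i) := by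
      intro i
      by_cases hi : (i : ℕ) < k
      · simp only [hi, if_true]
        nlinarith [hge i hi, hc1 i]
      · simp only [hi, if_false]
        nlinarith [hle i hi, hc0 i]
    calc ∑ i, lam i * c i
        ≤ ∑ i : Fin d, (if (i : ℕ) < k then lam i + t * (c i - 1) else t * c i) :=
          Finset.sum_le_sum fun i _ => key i
      _ = ∑ i ∈ Finset.univ.filter (fun i : Fin d => (i : ℕ) < k), (lam i + t * (c i - 1))
          + ∑ i ∈ Finset.univ.filter (fun i : Fin d => ¬ (i : ℕ) < k), t * c i := by
          rw [← Finset.sum_filter_add_sum_filter_not Finset.univ (fun i : Fin d => (i : ℕ) < k)]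
          congr 1
          · exact Finset.sum_congr rfl fun i hi => by
              simp only [Finset.mem_filter] at hi; simp [hi.2]
          · exact Finset.sum_congr rfl fun i hi => by
              simp only [Finset.mem_filter] at hi; simp [hi.2]
      _ = ∑ i ∈ Finset.univ.filter (fun i : Fin d => (i : ℕ) < k), lam i
          + t * ((∑ i ∈ Finset.univ.filter (fun i : Fin d => (i : ℕ) < k), c i
              + ∑ i ∈ Finset.univ.filter (fun i : Fin d => ¬ (i : ℕ) < k), c i) - k) := by
          rw [Finset.sum_add_distrib]
          rw [← Finset.mul_sum, ← Finset.mul_sum, Finset.sum_sub_distrib]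
          simp only [Finset.sum_const, nsmul_eq_mul, mul_one, card_filter_lt hk]
          ring
      _ = ∑ i ∈ Finset.univ.filter (fun i : Fin d => (i : ℕ) < k), lam i := by
          rw [Finset.sum_filter_add_sum_filter_not Finset.univ (fun i : Fin d => (i : ℕ) < k) c,
            hsum]
          ring

/-- Ky Fan-type bound on Tr(XᵀEX) for X with orthonormal columns. -/
lemma kyfan {d k : ℕ} (hk : k ≤ d) {E : Matrix (Fin d) (Fin d) ℝ} (hE : E.IsHermitian)
    (lam : Fin d → ℝ) (hlam : IsSortedEigenvalues hE lam)
    (X : Matrix (Fin d) (Fin k) ℝ) (hX : Xᵀ * X = 1) :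
    Matrix.trace (Xᵀ * E * X) ≤
      ∑ i ∈ Finset.univ.filter (fun i : Fin d => (i : ℕ) < k), lam i := by
  classical
  set U : Matrix (Fin d) (Fin d) ℝ := (hE.eigenvectorUnitary : Matrix (Fin d) (Fin d) ℝ) with hU
  set μ : Fin d → ℝ := hE.eigenvalues with hμ
  have hspec : E = U * diagonal μ * Uᵀ := by
    have := hE.spectral_theorem
    simpa [Matrix.star_eq_conjTranspose] using this
  have hUU : U * Uᵀ = 1 := by
    have := Unitary.mul_star_self_of_mem hE.eigenvectorUnitary.2
    simpa [Matrix.star_eq_conjTranspose] using this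
  set Y : Matrix (Fin d) (Fin k) ℝ := Uᵀ * X with hY
  have hYt : Yᵀ = Xᵀ * U := by rw [hY, transpose_mul, transpose_transpose]
  have hYY : Yᵀ * Y = 1 := by
    rw [hYt, hY, Matrix.mul_assoc, ← Matrix.mul_assoc U Uᵀ X, hUU, Matrix.one_mul, hX]
  set P : Matrix (Fin d) (Fin d) ℝ := Y * Yᵀ with hP
  have hPP : P * P = P := by
    rw [hP, Matrix.mul_assoc, ← Matrix.mul_assoc Yᵀ Y Yᵀ, hYY, Matrix.one_mul]
  have hPt : Pᵀ = P := by rw [hP, transpose_mul, transpose_transpose]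
  have h1P : (1 - P).PosSemidef := by
    have heq : (1 - P)ᴴ * (1 - P) = 1 - P := by
      have h1 : (1 - P)ᴴ = 1 - P := by
        rw [show (1 - P)ᴴ = (1 - P)ᵀ by simp, transpose_sub, transpose_one, hPt]
      rw [h1]
      calc (1 - P) * (1 - P) = 1 - P - P + P * P := by noncomm_ring
        _ = 1 - P := by rw [hPP]; abel
    rw [← heq]
    exact posSemidef_conjTranspose_mul_self _
  set c : Fin d → ℝ := fun i => P i i with hc
  have hc0 : ∀ i, 0 ≤ c i := by
    intro i
    have hPpsd : P.PosSemidef := by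
      have := posSemidef_self_mul_conjTranspose Y
      simpa [hP, show Yᴴ = Yᵀ by simp] using this
    exact psd_diag_nonneg hPpsd i
  have hc1 : ∀ i, c i ≤ 1 := by
    intro i
    have := psd_diag_nonneg h1P i
    simp only [Matrix.sub_apply, Matrix.one_apply_eq] at this
    simp only [hc]
    linarith
  have hsum : ∑ i, c i = (k : ℝ) := by
    have h1 : ∑ i, c i = P.trace := rfl
    rw [h1, hP, Matrix.trace_mul_comm, hYY]
    simp
  have htr : Matrix.trace (Xᵀ * E * X) = ∑ i, μ i * c i := by
    have hrw : Xᵀ * E * X = Yᵀ * diagonal μ * Y := by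
      rw [hspec, hYt, hY]
      simp only [Matrix.mul_assoc]
    rw [hrw, Matrix.trace_mul_cycle]
    rw [show Y * Yᵀ = P from rfl]
    rw [Matrix.trace]
    apply Finset.sum_congr rfl
    intro i _
    simp [Matrix.diag, Matrix.mul_diagonal, hc, mul_comm]
  rw [htr]
  obtain ⟨hmono, e, he⟩ := hlam
  have hre : ∑ i, μ i * c i = ∑ i, lam i * (c ∘ e) i := by
    rw [← Equiv.sum_comp e (fun i => μ i * c i)]
    exact Finset.sum_congr rfl fun i _ => by simp [he, hμ]
  rw [hre]
  exact comb_bound hk lam (c ∘ e) hmono (fun i => hc0 _) (fun i => hc1 _)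
    (by simpa using (Equiv.sum_comp e c).trans hsum)

/-- If A − Ā is PSD, all X ∈ 𝒳 have orthonormal columns, and X̄ is a
γ-approximate maximizer of Tr(XᵀĀX) over 𝒳, then
Tr(X̄ᵀAX̄) ≥ γ·Tr(X⋆ᵀAX⋆) − ∑_{i=1}^k λ_i(A−Ā). -/
theorem stmt13 (d k : ℕ) (hk : k ≤ d)
    (A Abar : Matrix (Fin d) (Fin d) ℝ)
    (hA : A.PosSemidef) (hAbar : Abar.PosSemidef)
    (hE : (A - Abar).PosSemidef)
    (lam : Fin d → ℝ) (hlam : IsSortedEigenvalues hE.1 lam)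
    (𝒳 : Set (Matrix (Fin d) (Fin k) ℝ))
    (horth : ∀ X ∈ 𝒳, Xᵀ * X = 1)
    (Xstar : Matrix (Fin d) (Fin k) ℝ) (hXstar : Xstar ∈ 𝒳)
    (hXstarMax : ∀ X ∈ 𝒳, Matrix.trace (Xᵀ * A * X) ≤ Matrix.trace (Xstarᵀ * A * Xstar))
    (Xbarstar : Matrix (Fin d) (Fin k) ℝ) (hXbarstar : Xbarstar ∈ 𝒳)
    (hXbarstarMax : ∀ X ∈ 𝒳,
      Matrix.trace (Xᵀ * Abar * X) ≤ Matrix.trace (Xbarstarᵀ * Abar * Xbarstar))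
    (γ : ℝ) (hγ0 : 0 < γ) (hγ1 : γ ≤ 1)
    (Xbar : Matrix (Fin d) (Fin k) ℝ) (hXbar : Xbar ∈ 𝒳)
    (hXbarApprox : γ * Matrix.trace (Xbarstarᵀ * Abar * Xbarstar) ≤
      Matrix.trace (Xbarᵀ * Abar * Xbar)) :
    γ * Matrix.trace (Xstarᵀ * A * Xstar) -
        (∑ i ∈ Finset.univ.filter (fun i : Fin d => (i : ℕ) < k), lam i) ≤
      Matrix.trace (Xbarᵀ * A * Xbar) := by
  have hsplit : ∀ X : Matrix (Fin d) (Fin k) ℝ,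
      Xᵀ * (A - Abar) * X = Xᵀ * A * X - Xᵀ * Abar * X := by
    intro X
    rw [Matrix.mul_sub, Matrix.sub_mul]
  have hEtr : ∀ X : Matrix (Fin d) (Fin k) ℝ,
      0 ≤ Matrix.trace (Xᵀ * (A - Abar) * X) := by
    intro X
    have := hE.conjTranspose_mul_mul_same X
    rw [show Xᴴ = Xᵀ by simp] at this
    exact psd_trace_nonneg this
  have h1 : 0 ≤ Matrix.trace (Xbarᵀ * A * Xbar) - Matrix.trace (Xbarᵀ * Abar * Xbar) := by
    have := hEtr Xbar
    rwa [hsplit Xbar, trace_sub] at this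
  have h2 : 0 ≤ Matrix.trace (Xstarᵀ * A * Xstar) - Matrix.trace (Xstarᵀ * Abar * Xstar) := by
    have := hEtr Xstar
    rwa [hsplit Xstar, trace_sub] at this
  have h3 : Matrix.trace (Xstarᵀ * A * Xstar) - Matrix.trace (Xstarᵀ * Abar * Xstar) ≤
      ∑ i ∈ Finset.univ.filter (fun i : Fin d => (i : ℕ) < k), lam i := by
    have := kyfan hk hE.1 lam hlam Xstar (horth Xstar hXstar)
    rwa [hsplit Xstar, trace_sub] at this
  have h4 : Matrix.trace (Xstarᵀ * Abar * Xstar) ≤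
      Matrix.trace (Xbarstarᵀ * Abar * Xbarstar) := hXbarstarMax Xstar hXstar
  nlinarith [mul_le_mul_of_nonneg_left h4 hγ0.le,
    mul_le_mul_of_nonneg_right h2 (sub_nonneg.mpr hγ1)]
end

section
/- Let A be a d×d PSD matrix with entries in [−1,1], and let Ā be a symmetric matrix with entries in [−1−δ/6, 1+δ/6] satisfying |A_{ij}−Ā_{ij}| ≤ δ/6 for all i,j, where 0 < δ ≤ 1. Let x_d be an s-sparse unit vector maximizing yᵀĀy over s-sparse unit vectors, x⋆ an s-sparse unit vector maximizing yᵀAy, and suppose x̂ is an s-sparse unit vector with (1−δ/6)·x_dᵀ Ā x_d ≤ x̂ᵀ Ā x̂ ≤ x_dᵀ Ā x_d. Then |x⋆ᵀ A x⋆ − x̂ᵀ A x̂| ≤ δ·s. -/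
open Matrix BigOperators

/-- x is a unit-norm vector with at most s nonzero entries. -/
def SparseUnit {d : ℕ} (s : ℕ) (x : Fin d → ℝ) : Prop :=
  (∑ i, x i ^ 2 = 1) ∧ (Finset.univ.filter (fun i => x i ≠ 0)).card ≤ s

lemma quad_bound {d s : ℕ} (M : Matrix (Fin d) (Fin d) ℝ) (c : ℝ) (hc : 0 ≤ c)
    (hM : ∀ i j, |M i j| ≤ c) (y : Fin d → ℝ) (hy : SparseUnit s y) :
    |y ⬝ᵥ M *ᵥ y| ≤ c * s := by
  obtain ⟨hy1, hy2⟩ := hy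
  set T := Finset.univ.filter (fun i => y i ≠ 0) with hT
  have hzero : ∀ i, i ∉ T → y i = 0 := by
    intro i hi
    by_contra h
    exact hi (Finset.mem_filter.mpr ⟨Finset.mem_univ _, h⟩)
  have e1 : ∀ i, ∑ j ∈ T, y i * M i j * y j = ∑ j, y i * M i j * y j := fun i =>
    Finset.sum_subset (Finset.filter_subset _ _) (fun j _ hj => by simp [hzero j hj])
  have e2 : ∑ i ∈ T, ∑ j, y i * M i j * y j = ∑ i, ∑ j, y i * M i j * y j :=
    Finset.sum_subset (Finset.filter_subset _ _) (fun i _ hi => by simp [hzero i hi])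
  have hval : y ⬝ᵥ M *ᵥ y = ∑ i ∈ T, ∑ j ∈ T, y i * M i j * y j := by
    simp only [e1, e2, dotProduct, mulVec, Finset.mul_sum]
    exact Finset.sum_congr rfl fun i _ => Finset.sum_congr rfl fun j _ => by ring
  rw [hval]
  have habs : |∑ i ∈ T, ∑ j ∈ T, y i * M i j * y j|
      ≤ ∑ i ∈ T, ∑ j ∈ T, |y i| * c * |y j| := by
    refine (Finset.abs_sum_le_sum_abs _ _).trans ?_
    refine Finset.sum_le_sum fun i _ => ?_
    refine (Finset.abs_sum_le_sum_abs _ _).trans ?_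
    refine Finset.sum_le_sum fun j _ => ?_
    rw [abs_mul, abs_mul]
    exact mul_le_mul_of_nonneg_right
      (mul_le_mul_of_nonneg_left (hM i j) (abs_nonneg _)) (abs_nonneg _)
  refine habs.trans ?_
  have hsum : ∑ i ∈ T, ∑ j ∈ T, |y i| * c * |y j|
      = c * (∑ i ∈ T, |y i|) ^ 2 := by
    simp only [← Finset.sum_mul, ← Finset.mul_sum]
    ring
  rw [hsum]
  have hcs : (∑ i ∈ T, |y i|) ^ 2 ≤ (T.card : ℝ) * ∑ i ∈ T, |y i| ^ 2 :=
    sq_sum_le_card_mul_sum_sq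
  have hsq : ∑ i ∈ T, |y i| ^ 2 = 1 := by
    simp only [sq_abs]
    rw [← hy1]
    exact Finset.sum_subset (Finset.filter_subset _ _)
      (fun i _ hi => by simp [hzero i hi])
  rw [hsq, mul_one] at hcs
  have hcard : (T.card : ℝ) ≤ (s : ℝ) := by exact_mod_cast hy2
  calc c * (∑ i ∈ T, |y i|) ^ 2 ≤ c * (T.card : ℝ) := by gcongr
    _ ≤ c * s := by gcongr

lemma close_bound {d s : ℕ} {δ : ℝ} (hδ0 : 0 < δ)
    (A Abar : Matrix (Fin d) (Fin d) ℝ)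
    (hclose : ∀ i j, |A i j - Abar i j| ≤ δ / 6)
    (y : Fin d → ℝ) (hy : SparseUnit s y) :
    |y ⬝ᵥ A *ᵥ y - y ⬝ᵥ Abar *ᵥ y| ≤ δ / 6 * s := by
  have h := quad_bound (A - Abar) (δ / 6) (by positivity)
    (fun i j => hclose i j) y hy
  have : y ⬝ᵥ (A - Abar) *ᵥ y = y ⬝ᵥ A *ᵥ y - y ⬝ᵥ Abar *ᵥ y := by
    rw [Matrix.sub_mulVec, dotProduct_sub]
  rwa [this] at h

/-- If A is PSD with entries in [−1,1], Ā is symmetric with entries in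
[−1−δ/6, 1+δ/6] and entrywise δ/6-close to A, x_d maximizes yᵀĀy over
s-sparse unit vectors, x⋆ maximizes yᵀAy, and x̂ is an s-sparse unit vector
with (1−δ/6)·x_dᵀĀx_d ≤ x̂ᵀĀx̂ ≤ x_dᵀĀx_d, then |x⋆ᵀAx⋆ − x̂ᵀAx̂| ≤ δ·s. -/
theorem stmt16 (d s : ℕ) (δ : ℝ) (hδ0 : 0 < δ) (hδ1 : δ ≤ 1)
    (A Abar : Matrix (Fin d) (Fin d) ℝ)
    (hApsd : A.PosSemidef) (hAbnd : ∀ i j, |A i j| ≤ 1)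
    (hAbarSym : Abar.IsHermitian) (hAbarBnd : ∀ i j, |Abar i j| ≤ 1 + δ / 6)
    (hclose : ∀ i j, |A i j - Abar i j| ≤ δ / 6)
    (xd : Fin d → ℝ) (hxd : SparseUnit s xd)
    (hxdMax : ∀ y : Fin d → ℝ, SparseUnit s y → y ⬝ᵥ Abar *ᵥ y ≤ xd ⬝ᵥ Abar *ᵥ xd)
    (xstar : Fin d → ℝ) (hxstar : SparseUnit s xstar)
    (hxstarMax : ∀ y : Fin d → ℝ, SparseUnit s y → y ⬝ᵥ A *ᵥ y ≤ xstar ⬝ᵥ A *ᵥ xstar)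
    (xhat : Fin d → ℝ) (hxhat : SparseUnit s xhat)
    (hxhatLb : (1 - δ / 6) * (xd ⬝ᵥ Abar *ᵥ xd) ≤ xhat ⬝ᵥ Abar *ᵥ xhat)
    (hxhatUb : xhat ⬝ᵥ Abar *ᵥ xhat ≤ xd ⬝ᵥ Abar *ᵥ xd) :
    |xstar ⬝ᵥ A *ᵥ xstar - xhat ⬝ᵥ A *ᵥ xhat| ≤ δ * s := by
  have hs0 : (0 : ℝ) ≤ s := Nat.cast_nonneg s
  -- bounds on corruption
  have hstar := close_bound hδ0 A Abar hclose xstar hxstar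
  have hhat := close_bound hδ0 A Abar hclose xhat hxhat
  rw [abs_le] at hstar hhat
  -- bound on xd^T Abar xd
  have hxdBnd : xd ⬝ᵥ Abar *ᵥ xd ≤ (1 + δ / 6) * s := by
    have := quad_bound Abar (1 + δ / 6) (by positivity)
      (fun i j => hAbarBnd i j) xd hxd
    exact (le_abs_self _).trans this
  -- nonnegativity of difference
  have hdiff : xhat ⬝ᵥ A *ᵥ xhat ≤ xstar ⬝ᵥ A *ᵥ xstar := hxstarMax xhat hxhat
  rw [abs_of_nonneg (by linarith)]
  -- upper bound on xstar^T A xstar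
  have h1 : xstar ⬝ᵥ A *ᵥ xstar ≤ xd ⬝ᵥ Abar *ᵥ xd + δ / 6 * s := by
    have := hxdMax xstar hxstar
    linarith [hstar.2]
  have h2 : (1 - δ / 6) * (xd ⬝ᵥ Abar *ᵥ xd) - δ / 6 * s ≤ xhat ⬝ᵥ A *ᵥ xhat := by
    linarith [hhat.1]
  have h3 : δ / 6 * (xd ⬝ᵥ Abar *ᵥ xd) ≤ δ / 6 * ((1 + δ / 6) * s) := by
    gcongr
  nlinarith [mul_nonneg hδ0.le hs0, mul_nonneg (mul_nonneg hδ0.le hδ0.le) hs0]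
end

section
/- Let Ā = U Λ Uᵀ be a rank-r PSD d×d matrix (Λ positive diagonal r×r, U with orthonormal columns). Fix a compact constraint set 𝒳 ⊆ ℝ^{d×k} with ‖X^j‖₂ ≤ 1 for all columns of all X ∈ 𝒳, and let X̄⋆ maximize Tr(Xᵀ Ā X) over 𝒳. Suppose C_♯ ∈ ℝ^{r×k} has unit-norm columns such that for the optimal auxiliary matrix C̄⋆ (with unit-norm columns satisfying (X̄⋆^j)ᵀ Ā X̄⋆^j = ⟨Λ^{1/2}Uᵀ X̄⋆^j, C̄⋆^j⟩² for every j) we have ‖C_♯^j − C̄⋆^j‖₂ ≤ ε/2 for all j, where ε ∈ (0,1). If X_♯ maximizes ∑_{j=1}^k ⟨X^j, U Λ^{1/2} C_♯^j⟩² over 𝒳, then Tr(X_♯ᵀ Ā X_♯) ≥ (1−ε)·Tr(X̄⋆ᵀ Ā X̄⋆). -/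
open Matrix BigOperators

/-- Net-point guarantee: if Ā = UΛUᵀ is rank-r PSD, X̄⋆ maximizes Tr(XᵀĀX)
over 𝒳 (whose members have columns of norm at most 1), C̄⋆ is the optimal
auxiliary matrix, C_♯ has unit-norm columns with ‖C_♯^j − C̄⋆^j‖₂ ≤ ε/2 for
all j, and X_♯ maximizes ∑_j ⟨X^j, UΛ^{1/2}C_♯^j⟩² over 𝒳, then
Tr(X_♯ᵀĀX_♯) ≥ (1−ε)·Tr(X̄⋆ᵀĀX̄⋆). -/
theorem stmt17 (d k r : ℕ) (ε : ℝ) (hε : ε ∈ Set.Ioo (0 : ℝ) 1)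
    (U : Matrix (Fin d) (Fin r) ℝ) (hU : Uᵀ * U = 1)
    (Λ : Fin r → ℝ) (hΛ : ∀ i, 0 < Λ i)
    (Abar : Matrix (Fin d) (Fin d) ℝ)
    (hAbar : Abar = U * Matrix.diagonal Λ * Uᵀ)
    (𝒳 : Set (Matrix (Fin d) (Fin k) ℝ))
    (hcols : ∀ X ∈ 𝒳, ∀ j, ∑ i, (X i j) ^ 2 ≤ 1)
    (Xbarstar : Matrix (Fin d) (Fin k) ℝ) (hXbarstarMem : Xbarstar ∈ 𝒳)
    (hXbarstarMax : ∀ X ∈ 𝒳,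
      Matrix.trace (Xᵀ * Abar * X) ≤ Matrix.trace (Xbarstarᵀ * Abar * Xbarstar))
    (Cstar : Matrix (Fin r) (Fin k) ℝ)
    (hCstarUnit : ∀ j, ∑ i, (Cstar i j) ^ 2 = 1)
    (hCstarOpt : ∀ j,
      (fun i => Xbarstar i j) ⬝ᵥ Abar *ᵥ (fun i => Xbarstar i j) =
        (∑ i, Real.sqrt (Λ i) * (∑ a, U a i * Xbarstar a j) * Cstar i j) ^ 2)
    (Csharp : Matrix (Fin r) (Fin k) ℝ)
    (hCsharpUnit : ∀ j, ∑ i, (Csharp i j) ^ 2 = 1)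
    (hCsharpClose : ∀ j, Real.sqrt (∑ i, (Csharp i j - Cstar i j) ^ 2) ≤ ε / 2)
    (Xsharp : Matrix (Fin d) (Fin k) ℝ) (hXsharpMem : Xsharp ∈ 𝒳)
    (hXsharpMax : ∀ X ∈ 𝒳,
      (∑ j, (∑ i, X i j *
          (U * Matrix.diagonal (fun i => Real.sqrt (Λ i)) * Csharp) i j) ^ 2) ≤
        ∑ j, (∑ i, Xsharp i j *
          (U * Matrix.diagonal (fun i => Real.sqrt (Λ i)) * Csharp) i j) ^ 2) :
    (1 - ε) * Matrix.trace (Xbarstarᵀ * Abar * Xbarstar) ≤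
      Matrix.trace (Xsharpᵀ * Abar * Xsharp) := by

  obtain ⟨hε0, hε1⟩ := hε
  -- the "spectral coordinates" of a column
  set y : Matrix (Fin d) (Fin k) ℝ → Fin k → Fin r → ℝ :=
    fun X j i => Real.sqrt (Λ i) * ∑ a, U a i * X a j with hy
  -- quadratic form identity
  have hquad : ∀ x : Fin d → ℝ,
      x ⬝ᵥ Abar *ᵥ x = ∑ i, (Real.sqrt (Λ i) * ∑ a, U a i * x a)^2 := by
    intro x
    rw [hAbar, Matrix.mul_assoc, ← Matrix.mulVec_mulVec, ← Matrix.mulVec_mulVec,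
      Matrix.dotProduct_mulVec]
    simp only [dotProduct, vecMul, dotProduct, mulVec, Matrix.diagonal_apply, ite_mul, zero_mul,
      Finset.sum_ite_eq, Finset.mem_univ, if_true, Matrix.transpose_apply, mul_pow,
      Real.sq_sqrt (hΛ _).le]
    refine Finset.sum_congr rfl fun i _ => ?_
    rw [show (∑ a, x a * U a i) = ∑ a, U a i * x a from
      Finset.sum_congr rfl fun a _ => mul_comm _ _]
    ring
  -- trace as a sum of quadratic forms
  have htrace : ∀ X : Matrix (Fin d) (Fin k) ℝ,
      Matrix.trace (Xᵀ * Abar * X) = ∑ j, ∑ i, (y X j i)^2 := by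
    intro X
    have h0 : Matrix.trace (Xᵀ * Abar * X)
        = ∑ j, (fun i => X i j) ⬝ᵥ Abar *ᵥ (fun i => X i j) := by
      simp only [Matrix.trace, Matrix.diag, Matrix.mul_apply, Matrix.transpose_apply, dotProduct,
        mulVec, dotProduct, Finset.sum_mul, Finset.mul_sum]
      refine Finset.sum_congr rfl fun j _ => ?_
      rw [Finset.sum_comm]
      exact Finset.sum_congr rfl fun a _ => Finset.sum_congr rfl fun b _ => by ring
    rw [h0]
    exact Finset.sum_congr rfl fun j _ => hquad _
  -- inner product identity
  have hip : ∀ (X : Matrix (Fin d) (Fin k) ℝ) (j : Fin k),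
      ∑ i, X i j * (U * Matrix.diagonal (fun i => Real.sqrt (Λ i)) * Csharp) i j
        = ∑ i, y X j i * Csharp i j := by
    intro X j
    simp only [hy, Matrix.mul_apply, Matrix.diagonal_apply, ite_mul, zero_mul, mul_ite, mul_zero,
      Finset.sum_ite_eq, Finset.sum_ite_eq', Finset.mem_univ, if_true, Finset.mul_sum,
      Finset.sum_mul]
    rw [Finset.sum_comm]
    refine Finset.sum_congr rfl fun i _ => Finset.sum_congr rfl fun a _ => by ring
  -- Step 1: Cauchy–Schwarz, per column of Xsharp
  have step1 : (∑ j, (∑ i, y Xsharp j i * Csharp i j)^2)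
      ≤ Matrix.trace (Xsharpᵀ * Abar * Xsharp) := by
    rw [htrace]
    refine Finset.sum_le_sum fun j _ => ?_
    calc (∑ i, y Xsharp j i * Csharp i j)^2
        ≤ (∑ i, (y Xsharp j i)^2) * (∑ i, (Csharp i j)^2) :=
          Finset.sum_mul_sq_le_sq_mul_sq _ _ _
      _ = ∑ i, (y Xsharp j i)^2 := by rw [hCsharpUnit j, mul_one]
  -- Step 2: optimality of Xsharp for the surrogate objective
  have step2 : (∑ j, (∑ i, y Xbarstar j i * Csharp i j)^2)
      ≤ ∑ j, (∑ i, y Xsharp j i * Csharp i j)^2 := by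
    have := hXsharpMax Xbarstar hXbarstarMem
    calc (∑ j, (∑ i, y Xbarstar j i * Csharp i j)^2)
        = ∑ j, (∑ i, Xbarstar i j *
            (U * Matrix.diagonal (fun i => Real.sqrt (Λ i)) * Csharp) i j)^2 := by
          exact Finset.sum_congr rfl fun j _ => by rw [hip]
      _ ≤ ∑ j, (∑ i, Xsharp i j *
            (U * Matrix.diagonal (fun i => Real.sqrt (Λ i)) * Csharp) i j)^2 := this
      _ = ∑ j, (∑ i, y Xsharp j i * Csharp i j)^2 :=
          Finset.sum_congr rfl fun j _ => by rw [hip]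
  -- Step 3: per-column lower bound at Xbarstar
  have step3 : ∀ j, (1 - ε) * (∑ i, (y Xbarstar j i)^2)
      ≤ (∑ i, y Xbarstar j i * Csharp i j)^2 := by
    intro j
    set S : ℝ := ∑ i, (y Xbarstar j i)^2 with hSdef
    set a : ℝ := ∑ i, y Xbarstar j i * Cstar i j with hadef
    set b : ℝ := ∑ i, y Xbarstar j i * Csharp i j with hbdef
    have hS : 0 ≤ S := Finset.sum_nonneg fun i _ => sq_nonneg _
    have ha : a^2 = S := by
      have h1 := hCstarOpt j
      rw [hquad] at h1
      rw [hadef, hSdef, ← h1]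
    have hdsq : (∑ i, (Csharp i j - Cstar i j)^2) ≤ (ε/2)^2 := by
      have h2 := hCsharpClose j
      have h3 : 0 ≤ ∑ i, (Csharp i j - Cstar i j)^2 :=
        Finset.sum_nonneg fun i _ => sq_nonneg _
      calc (∑ i, (Csharp i j - Cstar i j)^2)
          = (Real.sqrt (∑ i, (Csharp i j - Cstar i j)^2))^2 := (Real.sq_sqrt h3).symm
        _ ≤ (ε/2)^2 := by
            apply pow_le_pow_left₀ (Real.sqrt_nonneg _) h2
    have he : (b - a)^2 ≤ S * (ε/2)^2 := by
      have hba : b - a = ∑ i, y Xbarstar j i * (Csharp i j - Cstar i j) := by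
        rw [hbdef, hadef, ← Finset.sum_sub_distrib]
        exact Finset.sum_congr rfl fun i _ => by ring
      calc (b - a)^2
          = (∑ i, y Xbarstar j i * (Csharp i j - Cstar i j))^2 := by rw [hba]
        _ ≤ (∑ i, (y Xbarstar j i)^2) * (∑ i, (Csharp i j - Cstar i j)^2) :=
            Finset.sum_mul_sq_le_sq_mul_sq _ _ _
        _ ≤ S * (ε/2)^2 := mul_le_mul_of_nonneg_left hdsq hS
    nlinarith [sq_nonneg (2*a*(b-a) + ε*S), sq_nonneg (b-a), sq_nonneg (b+a),
      mul_nonneg hS hε0.le]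
  -- combine
  calc (1 - ε) * Matrix.trace (Xbarstarᵀ * Abar * Xbarstar)
      = ∑ j, (1 - ε) * (∑ i, (y Xbarstar j i)^2) := by
        rw [htrace, Finset.mul_sum]
    _ ≤ ∑ j, (∑ i, y Xbarstar j i * Csharp i j)^2 :=
        Finset.sum_le_sum fun j _ => step3 j
    _ ≤ ∑ j, (∑ i, y Xsharp j i * Csharp i j)^2 := step2
    _ ≤ Matrix.trace (Xsharpᵀ * Abar * Xsharp) := step1
end
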